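/- Let α = γ_{b,r} ∧ γ_{L,R'} with 0 ≤ L ≤ b and 0 < r < R' < ∞, and let β = δ_D ⊗ min_{i=1..n}((δ_{τ_i} ⊗ I_{σ_i} ⊗ γ_{0,ρ_i}) ∧ δ_0) be an MSLC curve with D ≥ 0, τ_i, σ_i ≥ 0, ρ_i ∈ (0,+∞], where R' ≥ max{ρ_i : ρ_i < +∞} and r ≤ min_i ρ_i. Write Y = ((b−L)/(R'−r))·r + b. Then hdev(α, β) = D + max( 0, max over i with ρ_i < +∞ of max(0, τ_i·1{σ_i ≥ Y} − [σ_i − b]⁺/r, τ_i·1{Y ≥ σ_i} + [Y − σ_i]⁺/ρ_i − (b−L)/(R'−r)), max over i with ρ_i = +∞ of max(0, τ_i·1{σ_i ≥ Y} − [σ_i − b]⁺/r, τ_i·1{Y ≥ σ_i} − [σ_i − L]⁺/R') ), where [x]⁺ = max(x,0) and 1{C} is 1 if condition C holds and 0 otherwise. -/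

import Mathlib

open scoped ENNReal
open Classical

noncomputable section

/-- Burst-delay function `δ_T`: `0` for `t ≤ T`, `+∞` for `t > T`. -/
def bdelay (T : ℝ) : ℝ → ℝ≥0∞ := fun t => if t ≤ T then 0 else ⊤

/-- Window function `I_w`: `w` at `t = 0`, `+∞` for `t > 0` (and `0` for `t < 0`). -/
def wndw (w : ℝ≥0∞) : ℝ → ℝ≥0∞ := fun t => if t < 0 then 0 else if t = 0 then w else ⊤

/-- Token-bucket curve `γ_{b,r}`: `b + r·t` for `t > 0`, `0` for `t ≤ 0`. -/
def tbkt (b r : ℝ≥0∞) : ℝ → ℝ≥0∞ := fun t => if t ≤ 0 then 0 else b + r * ENNReal.ofReal t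

/-- Min-plus convolution `(f ⊗ g)(t) = inf_{0 ≤ u ≤ t} (f(t − u) + g(u))` for `t ≥ 0`,
extended by `0` on negative times. -/
def mconv (f g : ℝ → ℝ≥0∞) : ℝ → ℝ≥0∞ :=
  fun t => if t < 0 then 0 else ⨅ u ∈ Set.Icc (0 : ℝ) t, (f (t - u) + g u)

/-- The basic MSLC building block `(δ_τ ⊗ I_σ ⊗ γ_{0,ρ}) ∧ δ_0`. -/
def mslcStep (τ : ℝ) (σ ρ : ℝ≥0∞) : ℝ → ℝ≥0∞ :=
  mconv (mconv (bdelay τ) (wndw σ)) (tbkt 0 ρ) ⊓ bdelay 0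

/-- Horizontal deviation (delay bound):
`hdev(α, β) = sup_{t ≥ 0} inf { d ≥ 0 : α(t − d) ≤ β(t) }`. -/
def hdev (α β : ℝ → ℝ≥0∞) : ℝ≥0∞ :=
  ⨆ t ∈ Set.Ici (0 : ℝ), ⨅ d ∈ {d : ℝ | 0 ≤ d ∧ α (t - d) ≤ β t}, ENNReal.ofReal d

/-- Vertical deviation (backlog bound): `vdev(α, β) = sup_{u ≥ 0} (α(u) − β(u))`
with truncated subtraction (so `x − (+∞) = 0`). -/
def vdev (α β : ℝ → ℝ≥0∞) : ℝ≥0∞ :=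
  ⨆ u ∈ Set.Ici (0 : ℝ), (α u - β u)

/-- Min-plus deconvolution `(f ⊘ g)(t) = sup_{u ≥ 0} (f(t + u) − g(u))`. -/
def mdeconv (f g : ℝ → ℝ≥0∞) : ℝ → ℝ≥0∞ :=
  fun t => ⨆ u ∈ Set.Ici (0 : ℝ), (f (t + u) - g u)

/-- FIFO leftover `(β ⊖_θ α)(t) = [β(t) − α(t − θ)]⁺` for `t > θ`, `0` for `t ≤ θ`. -/
def leftover (β α : ℝ → ℝ≥0∞) (θ : ℝ) : ℝ → ℝ≥0∞ :=
  fun t => if t ≤ θ then 0 else β t - α (t - θ)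

/-- Nondecreasing lower bound `f↑(t) = inf_{u ≥ t} f(u)`. -/
def ndlb (f : ℝ → ℝ≥0∞) : ℝ → ℝ≥0∞ := fun t => ⨅ u ∈ Set.Ici t, f u

/-!
For `t > 0` each MSLC block is `β_i(t) = σ_i + ρ_i (t - τ_i)⁺`, and `α` is the minimum of two lines
meeting at the knee `((b - L)/(R' - r), Y)`, so that `α(x) ≤ c` iff
`x ≤ α⁻¹(c) := max(0, (c - b)/r, (c - L)/R')`. The `i`-th term `m_i` of the formula is an exact
delay for the block `β_i`: `α(s - m_i) ≤ β_i(s)` for all `s`, because `r ≤ ρ_i ≤ R'` keeps the slope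
of `β_i` between the two slopes of `α`; and `m_i` is attained at a single instant, namely `τ_i` when
the burst `σ_i` is at least `Y` or `ρ_i = ∞`, and otherwise the time at which `β_i` reaches `Y`. As
`α` is nondecreasing, the delay against the minimum of the blocks shifted by `D` is `D + max_i m_i`.
-/

lemma bdelay_of_le {T t : ℝ} (h : t ≤ T) : bdelay T t = 0 := if_pos h

lemma bdelay_of_lt {T t : ℝ} (h : T < t) : bdelay T t = ⊤ := if_neg h.not_ge

lemma tbkt_of_nonpos (b r : ℝ≥0∞) {t : ℝ} (h : t ≤ 0) : tbkt b r t = 0 := if_pos h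

lemma tbkt_of_pos (b r : ℝ≥0∞) {t : ℝ} (h : 0 < t) : tbkt b r t = b + r * ENNReal.ofReal t :=
  if_neg h.not_ge

lemma tbkt_mono (b r : ℝ≥0∞) : Monotone (tbkt b r) := by
  intro x y hxy
  rcases le_or_gt x 0 with hx | hx
  · rw [tbkt_of_nonpos b r hx]
    exact zero_le
  · rw [tbkt_of_pos b r hx, tbkt_of_pos b r (hx.trans_le hxy)]
    gcongr

lemma tbkt_zero_apply (ρ : ℝ≥0∞) (t : ℝ) : tbkt 0 ρ t = ρ * ENNReal.ofReal t := by
  rcases le_or_gt t 0 with ht | ht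
  · rw [tbkt_of_nonpos 0 ρ ht, ENNReal.ofReal_of_nonpos ht, mul_zero]
  · rw [tbkt_of_pos 0 ρ ht, zero_add]

lemma mconv_of_nonneg (f g : ℝ → ℝ≥0∞) {t : ℝ} (ht : 0 ≤ t) :
    mconv f g t = ⨅ u ∈ Set.Icc (0 : ℝ) t, (f (t - u) + g u) :=
  if_neg ht.not_gt

lemma mconv_congr_left {f f' : ℝ → ℝ≥0∞} (h : ∀ s, 0 ≤ s → f s = f' s) (g : ℝ → ℝ≥0∞) :
    mconv f g = mconv f' g := by
  funext t
  rcases lt_or_ge t 0 with ht | ht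
  · simp only [mconv, if_pos ht]
  · rw [mconv_of_nonneg _ _ ht, mconv_of_nonneg _ _ ht]
    exact iInf_congr fun u => iInf_congr fun hu => by rw [h _ (sub_nonneg.2 hu.2)]

lemma mconv_add_const_left (f g : ℝ → ℝ≥0∞) (c : ℝ≥0∞) {t : ℝ} (ht : 0 ≤ t) :
    mconv (fun s => f s + c) g t = mconv f g t + c := by
  simp only [mconv_of_nonneg _ _ ht, ENNReal.iInf_add, add_right_comm]

lemma mconv_wndw (f : ℝ → ℝ≥0∞) (σ : ℝ≥0∞) {t : ℝ} (ht : 0 ≤ t) :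
    mconv f (wndw σ) t = f t + σ := by
  rw [mconv_of_nonneg _ _ ht]
  apply le_antisymm
  · exact iInf₂_le_of_le 0 ⟨le_rfl, ht⟩ (by simp [wndw])
  · refine le_iInf₂ fun u hu => ?_
    rcases hu.1.eq_or_lt with rfl | hu0
    · simp [wndw]
    · simp [wndw, hu0.ne', hu0.not_gt]

lemma mconv_bdelay {D : ℝ} (hD : 0 ≤ D) {g : ℝ → ℝ≥0∞} (hg : Monotone g)
    (hg0 : ∀ t, t ≤ 0 → g t = 0) (t : ℝ) : mconv (bdelay D) g t = g (t - D) := by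
  rcases lt_or_ge t 0 with ht | ht
  · rw [mconv, if_pos ht, hg0 _ (by linarith)]
  rw [mconv_of_nonneg _ _ ht]
  apply le_antisymm
  · rcases le_total (t - D) 0 with htD | htD
    · refine iInf₂_le_of_le 0 ⟨le_rfl, ht⟩ ?_
      rw [hg0 _ htD, hg0 0 le_rfl, bdelay_of_le (by linarith), add_zero]
    · refine iInf₂_le_of_le (t - D) ⟨htD, by linarith⟩ ?_
      rw [sub_sub_cancel, bdelay_of_le le_rfl, zero_add]
  · refine le_iInf₂ fun u _ => ?_
    rcases le_or_gt (t - u) D with hu | hu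
    · rw [bdelay_of_le hu, zero_add]
      exact hg (by linarith)
    · rw [bdelay_of_lt hu, top_add]
      exact le_top

lemma mslcStep_of_nonpos (τ : ℝ) (σ ρ : ℝ≥0∞) {t : ℝ} (ht : t ≤ 0) : mslcStep τ σ ρ t = 0 :=
  le_antisymm (inf_le_right.trans (bdelay_of_le ht).le) zero_le

lemma mslcStep_of_pos {τ : ℝ} (σ ρ : ℝ≥0∞) (hτ : 0 ≤ τ) {t : ℝ} (ht : 0 < t) :
    mslcStep τ σ ρ t = σ + ρ * ENNReal.ofReal (t - τ) := by
  have hconv :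
      mconv (mconv (bdelay τ) (wndw σ)) (tbkt 0 ρ) t = σ + ρ * ENNReal.ofReal (t - τ) := by
    rw [mconv_congr_left (fun s hs => mconv_wndw (bdelay τ) σ hs),
      mconv_add_const_left _ _ _ ht.le,
      mconv_bdelay hτ (tbkt_mono 0 ρ) (fun _ => tbkt_of_nonpos 0 ρ), tbkt_zero_apply, add_comm]
  simp only [mslcStep, Pi.inf_apply, hconv, bdelay_of_lt ht, inf_top_eq]

lemma mslcStep_le {τ : ℝ} (σ ρ : ℝ≥0∞) (hτ : 0 ≤ τ) (t : ℝ) :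
    mslcStep τ σ ρ t ≤ σ + ρ * ENNReal.ofReal (t - τ) := by
  rcases le_or_gt t 0 with ht | ht
  · rw [mslcStep_of_nonpos τ σ ρ ht]
    exact zero_le
  · rw [mslcStep_of_pos σ ρ hτ ht]

lemma mslcStep_mono {τ : ℝ} (σ ρ : ℝ≥0∞) (hτ : 0 ≤ τ) : Monotone (mslcStep τ σ ρ) := by
  intro x y hxy
  rcases le_or_gt x 0 with hx | hx
  · rw [mslcStep_of_nonpos τ σ ρ hx]
    exact zero_le
  · rw [mslcStep_of_pos σ ρ hτ hx, mslcStep_of_pos σ ρ hτ (hx.trans_le hxy)]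
    gcongr

section Delay

variable {α β : ℝ → ℝ≥0∞}

lemma hdev_le_ofReal {c : ℝ} (hc : 0 ≤ c) (h : ∀ t, 0 ≤ t → α (t - c) ≤ β t) :
    hdev α β ≤ ENNReal.ofReal c :=
  iSup₂_le fun t ht => iInf₂_le c ⟨hc, h t ht⟩

lemma ofReal_le_hdev {t c : ℝ} (ht : 0 ≤ t) (h : ∀ d, 0 ≤ d → α (t - d) ≤ β t → c ≤ d) :
    ENNReal.ofReal c ≤ hdev α β :=
  le_iSup₂_of_le t ht (le_iInf₂ fun d hd => ENNReal.ofReal_le_ofReal (h d hd.1 hd.2))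

/-- At time `t`, data that arrived after time `t - T` has not been served yet. -/
def HasDelayWitness (α β : ℝ → ℝ≥0∞) (T : ℝ) : Prop :=
  ∃ t, 0 ≤ t ∧ ∀ x, α x ≤ β t → x ≤ t - T

lemma HasDelayWitness.mono {T T' : ℝ} (h : HasDelayWitness α β T) (hT : T' ≤ T) :
    HasDelayWitness α β T' := by
  obtain ⟨t, ht, hx⟩ := h
  exact ⟨t, ht, fun x hαβ => (hx x hαβ).trans (by linarith)⟩

lemma HasDelayWitness.max {T₁ T₂ : ℝ} (h₁ : HasDelayWitness α β T₁)
    (h₂ : HasDelayWitness α β T₂) : HasDelayWitness α β (max T₁ T₂) := by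
  rcases le_total T₁ T₂ with h | h
  · rwa [max_eq_right h]
  · rwa [max_eq_left h]

theorem hdev_mconv_bdelay_iInf {ι : Type*} [Finite ι] [Nonempty ι] {β : ι → ℝ → ℝ≥0∞}
    {m : ι → ℝ} {D : ℝ} (hD : 0 ≤ D) (hα : Monotone α) (hβ : ∀ i, Monotone (β i))
    (hβ0 : ∀ i t, t ≤ 0 → β i t = 0) (hm : ∀ i, 0 ≤ m i) (hub : ∀ i s, α (s - m i) ≤ β i s)
    (hlb : ∀ i, HasDelayWitness α (β i) (m i)) :
    hdev α (mconv (bdelay D) (⨅ i, β i)) = ENNReal.ofReal D + ⨆ i, ENNReal.ofReal (m i) := by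
  have hconv : ∀ t, mconv (bdelay D) (⨅ i, β i) t = ⨅ i, β i (t - D) := fun t => by
    rw [mconv_bdelay hD (Monotone.iInf hβ) (fun t ht => by simp [hβ0 _ t ht]), iInf_apply]
  apply le_antisymm
  · obtain ⟨j, hj⟩ := Finite.exists_max m
    calc hdev α (mconv (bdelay D) (⨅ i, β i)) ≤ ENNReal.ofReal (D + m j) := by
          refine hdev_le_ofReal (by linarith [hm j]) fun t _ => ?_
          rw [hconv]
          exact le_iInf fun i => (hα (by linarith [hj i])).trans (hub i (t - D))
      _ = ENNReal.ofReal D + ENNReal.ofReal (m j) := ENNReal.ofReal_add hD (hm j)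
      _ ≤ ENNReal.ofReal D + ⨆ i, ENNReal.ofReal (m i) :=
          add_le_add_right (le_iSup (fun i => ENNReal.ofReal (m i)) j) _
  · rw [ENNReal.add_iSup]
    refine iSup_le fun i => ?_
    obtain ⟨t, ht, hx⟩ := hlb i
    rw [← ENNReal.ofReal_add hD (hm i)]
    refine ofReal_le_hdev (t := D + t) (by linarith) fun d _ hd => ?_
    rw [hconv, add_sub_cancel_left] at hd
    linarith [hx _ (hd.trans (iInf_le _ i))]

end Delay

section ShapedArrival

variable {L b r R' : ℝ}

def shapedArrival (L b r R' : ℝ) : ℝ → ℝ≥0∞ :=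
  tbkt (ENNReal.ofReal b) (ENNReal.ofReal r) ⊓ tbkt (ENNReal.ofReal L) (ENNReal.ofReal R')

def shapedArrivalInv (L b r R' c : ℝ) : ℝ := max 0 (max ((c - b) / r) ((c - L) / R'))

lemma shapedArrival_mono : Monotone (shapedArrival L b r R') :=
  (tbkt_mono _ _).inf (tbkt_mono _ _)

lemma shapedArrival_of_nonpos {x : ℝ} (hx : x ≤ 0) : shapedArrival L b r R' x = 0 := by
  simp [shapedArrival, tbkt_of_nonpos _ _ hx]

lemma shapedArrival_le_ofReal_iff (hL : 0 ≤ L) (hb : 0 ≤ b) (hr : 0 < r) (hR : 0 < R')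
    {c x : ℝ} (hc : 0 ≤ c) :
    shapedArrival L b r R' x ≤ ENNReal.ofReal c ↔ x ≤ shapedArrivalInv L b r R' c := by
  rcases le_or_gt x 0 with hx | hx
  · rw [shapedArrival_of_nonpos hx]
    exact iff_of_true zero_le (hx.trans (le_max_left _ _))
  have hline : ∀ {a s : ℝ}, 0 ≤ a → 0 < s →
      (ENNReal.ofReal a + ENNReal.ofReal s * ENNReal.ofReal x ≤ ENNReal.ofReal c ↔
        x ≤ (c - a) / s) := fun {a s} ha hs => by
    rw [← ENNReal.ofReal_mul hs.le, ← ENNReal.ofReal_add ha (by positivity),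
      ENNReal.ofReal_le_ofReal_iff hc, le_div_iff₀ hs]
    constructor <;> intro <;> linarith
  simp only [shapedArrival, Pi.inf_apply, tbkt_of_pos _ _ hx, inf_le_iff, hline hb hr,
    hline hL hR, shapedArrivalInv, le_max_iff, hx.not_ge, false_or]

lemma shapedArrivalInv_zero (hL : 0 ≤ L) (hb : 0 ≤ b) (hr : 0 < r) (hR : 0 < R') :
    shapedArrivalInv L b r R' 0 = 0 :=
  max_eq_left (max_le (div_nonpos_of_nonpos_of_nonneg (by linarith) hr.le)
    (div_nonpos_of_nonpos_of_nonneg (by linarith) hR.le))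

lemma max_sub_div_le_shapedArrivalInv_left (hr : 0 < r) (c : ℝ) :
    max (c - b) 0 / r ≤ shapedArrivalInv L b r R' c := by
  rw [← max_div_div_right hr.le, zero_div]
  exact max_le (le_max_left _ _ |>.trans (le_max_right _ _)) (le_max_left _ _)

lemma max_sub_div_le_shapedArrivalInv_right (hR : 0 < R') (c : ℝ) :
    max (c - L) 0 / R' ≤ shapedArrivalInv L b r R' c := by
  rw [← max_div_div_right hR.le, zero_div]
  exact max_le (le_max_right _ _ |>.trans (le_max_right _ _)) (le_max_left _ _)

lemma hasDelayWitness_shapedArrival (hL : 0 ≤ L) (hb : 0 ≤ b) (hr : 0 < r) (hR : 0 < R')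
    {β : ℝ → ℝ≥0∞} {t c : ℝ} (ht : 0 ≤ t) (hc : 0 ≤ c) (hβ : β t ≤ ENNReal.ofReal c) :
    HasDelayWitness (shapedArrival L b r R') β (t - shapedArrivalInv L b r R' c) :=
  ⟨t, ht, fun x hx => by
    linarith [(shapedArrival_le_ofReal_iff hL hb hr hR hc).1 (hx.trans hβ)]⟩

end ShapedArrival

section Knee

variable {L b r R' : ℝ}

/-- `(kneeTime, kneeLevel)` is where the two lines of `shapedArrival` cross. -/
def kneeTime (L b r R' : ℝ) : ℝ := (b - L) / (R' - r)

def kneeLevel (L b r R' : ℝ) : ℝ := kneeTime L b r R' * r + b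

lemma kneeTime_nonneg (hLb : L ≤ b) (hrR : r < R') : 0 ≤ kneeTime L b r R' :=
  div_nonneg (by linarith) (by linarith)

lemma sub_div_eq_kneeTime_add_left (hr : 0 < r) (c : ℝ) :
    (c - b) / r = kneeTime L b r R' + (c - kneeLevel L b r R') / r := by
  unfold kneeLevel
  field_simp
  ring

lemma sub_div_eq_kneeTime_add_right (hr : 0 < r) (hrR : r < R') (c : ℝ) :
    (c - L) / R' = kneeTime L b r R' + (c - kneeLevel L b r R') / R' := by
  have : R' - r ≠ 0 := by linarith
  have : R' ≠ 0 := by linarith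
  unfold kneeLevel kneeTime
  field_simp
  ring

lemma shapedArrivalInv_le_of_kneeLevel_le (hLb : L ≤ b) (hr : 0 < r) (hrR : r < R') {c : ℝ}
    (hc : kneeLevel L b r R' ≤ c) : shapedArrivalInv L b r R' c ≤ (c - b) / r := by
  have hss := kneeTime_nonneg hLb hrR
  have hslope : (c - kneeLevel L b r R') / R' ≤ (c - kneeLevel L b r R') / r :=
    div_le_div_of_nonneg_left (by linarith) hr hrR.le
  rw [shapedArrivalInv, sub_div_eq_kneeTime_add_left hr, sub_div_eq_kneeTime_add_right hr hrR]
  exact max_le (add_nonneg hss (div_nonneg (by linarith) hr.le))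
    (max_le le_rfl (add_le_add_right hslope _))

lemma shapedArrivalInv_le_of_le_kneeLevel (hr : 0 < r) (hrR : r < R') {c : ℝ}
    (hc : c ≤ kneeLevel L b r R') : shapedArrivalInv L b r R' c ≤ max (c - L) 0 / R' := by
  have hR : 0 < R' := hr.trans hrR
  have hslope : (c - kneeLevel L b r R') / r ≤ (c - kneeLevel L b r R') / R' := by
    rw [div_le_div_iff₀ hr hR]
    exact mul_le_mul_of_nonpos_left hrR.le (by linarith)
  rw [← max_div_div_right hR.le, zero_div, shapedArrivalInv, sub_div_eq_kneeTime_add_left hr,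
    sub_div_eq_kneeTime_add_right hr hrR]
  exact max_le (le_max_right _ _)
    (max_le (le_max_of_le_left (add_le_add_right hslope _)) (le_max_left _ _))

lemma kneeTime_add_le_shapedArrivalInv (hr : 0 < r) (hrR : r < R') {ρ : ℝ} (hrρ : r ≤ ρ)
    (hρR : ρ ≤ R') (d : ℝ) :
    kneeTime L b r R' + d ≤ shapedArrivalInv L b r R' (kneeLevel L b r R' + ρ * d) := by
  have hR : 0 < R' := hr.trans hrR
  rcases le_total 0 d with hd | hd
  · have : d ≤ ρ * d / r := by
      rw [le_div_iff₀' hr]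
      exact mul_le_mul_of_nonneg_right hrρ hd
    refine le_trans ?_ (le_max_left _ _ |>.trans (le_max_right _ _))
    rw [sub_div_eq_kneeTime_add_left hr, add_sub_cancel_left]
    gcongr
  · have : d ≤ ρ * d / R' := by
      rw [le_div_iff₀' hR]
      exact mul_le_mul_of_nonpos_right hρR hd
    refine le_trans ?_ (le_max_right _ _ |>.trans (le_max_right _ _))
    rw [sub_div_eq_kneeTime_add_right hr hrR, add_sub_cancel_left]
    gcongr

end Knee

section Mslc

variable {L b r R' τ σ : ℝ} {ρ : ℝ≥0∞}

def mslcDelay (L b r R' τ σ : ℝ) (ρ : ℝ≥0∞) : ℝ :=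
  if ρ = ⊤ then
    max 0 (max
      (τ * (if kneeLevel L b r R' ≤ σ then 1 else 0) - max (σ - b) 0 / r)
      (τ * (if σ ≤ kneeLevel L b r R' then 1 else 0) - max (σ - L) 0 / R'))
  else
    max 0 (max
      (τ * (if kneeLevel L b r R' ≤ σ then 1 else 0) - max (σ - b) 0 / r)
      (τ * (if σ ≤ kneeLevel L b r R' then 1 else 0)
        + max (kneeLevel L b r R' - σ) 0 / ρ.toReal - kneeTime L b r R'))

lemma mslcDelay_nonneg : 0 ≤ mslcDelay L b r R' τ σ ρ := by
  unfold mslcDelay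
  split_ifs <;> exact le_max_left _ _

lemma sub_max_div_le_mslcDelay (h : kneeLevel L b r R' ≤ σ) :
    τ - max (σ - b) 0 / r ≤ mslcDelay L b r R' τ σ ρ := by
  simp only [mslcDelay, if_pos h, mul_one]
  split_ifs <;> exact le_max_of_le_right (le_max_left _ _)

lemma sub_max_div_le_mslcDelay_top (h : σ ≤ kneeLevel L b r R') :
    τ - max (σ - L) 0 / R' ≤ mslcDelay L b r R' τ σ ⊤ := by
  simp only [mslcDelay, if_pos h, if_true, mul_one]
  exact le_max_of_le_right (le_max_right _ _)

lemma le_mslcDelay_of_ne_top (hρ : ρ ≠ ⊤) (h : σ ≤ kneeLevel L b r R') :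
    τ + (kneeLevel L b r R' - σ) / ρ.toReal - kneeTime L b r R' ≤
      mslcDelay L b r R' τ σ ρ := by
  simp only [mslcDelay, if_neg hρ, if_pos h, mul_one, max_eq_left (sub_nonneg.2 h)]
  exact le_max_of_le_right (le_max_right _ _)

lemma sub_mslcDelay_top_le (hr : 0 < r) (hR : 0 < R') :
    τ - mslcDelay L b r R' τ σ ⊤ ≤ shapedArrivalInv L b r R' σ := by
  rcases le_total (kneeLevel L b r R') σ with h | h
  · linarith [@sub_max_div_le_mslcDelay L b r R' τ σ ⊤ h,
      @max_sub_div_le_shapedArrivalInv_left L b r R' hr σ]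
  · linarith [@sub_max_div_le_mslcDelay_top L b r R' τ σ h,
      @max_sub_div_le_shapedArrivalInv_right L b r R' hR σ]

lemma sub_mslcDelay_le (hLb : L ≤ b) (hr : 0 < r) (hrR : r < R') (hρ : ρ ≠ ⊤)
    (hrρ : r ≤ ρ.toReal) (hρR : ρ.toReal ≤ R') (s : ℝ) :
    s - mslcDelay L b r R' τ σ ρ ≤
      shapedArrivalInv L b r R' (σ + ρ.toReal * max (s - τ) 0) := by
  have hp : s - τ ≤ max (s - τ) 0 := le_max_left _ _
  rcases le_total (kneeLevel L b r R') σ with h | h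
  · have hbσ : b ≤ σ := by
      have := mul_nonneg (kneeTime_nonneg hLb hrR) hr.le
      unfold kneeLevel at h
      linarith
    have hm := sub_max_div_le_mslcDelay (τ := τ) (ρ := ρ) h
    rw [max_eq_left (sub_nonneg.2 hbσ)] at hm
    have hslope :
        (σ - b) / r + max (s - τ) 0 ≤ (σ + ρ.toReal * max (s - τ) 0 - b) / r := by
      rw [le_div_iff₀ hr, add_mul, div_mul_cancel₀ _ hr.ne']
      nlinarith [le_max_right (s - τ) 0]
    calc s - mslcDelay L b r R' τ σ ρ ≤ (σ - b) / r + max (s - τ) 0 := by linarith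
      _ ≤ (σ + ρ.toReal * max (s - τ) 0 - b) / r := hslope
      _ ≤ max (σ + ρ.toReal * max (s - τ) 0 - b) 0 / r := by gcongr; exact le_max_left _ _
      _ ≤ _ := max_sub_div_le_shapedArrivalInv_left hr _
  · -- the block reaches `kneeLevel` at time `τ + q`
    set q := (kneeLevel L b r R' - σ) / ρ.toReal
    have hq : σ + ρ.toReal * max (s - τ) 0 =
        kneeLevel L b r R' + ρ.toReal * (max (s - τ) 0 - q) := by
      have hρq : ρ.toReal * q = kneeLevel L b r R' - σ := mul_div_cancel₀ _ (by linarith)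
      linear_combination hρq
    rw [hq]
    linarith [le_mslcDelay_of_ne_top (τ := τ) hρ h,
      kneeTime_add_le_shapedArrivalInv (L := L) (b := b) hr hrR hrρ hρR (max (s - τ) 0 - q)]

lemma shapedArrival_sub_mslcDelay_le (hL : 0 ≤ L) (hLb : L ≤ b) (hr : 0 < r) (hrR : r < R')
    (hτ : 0 ≤ τ) (hσ : 0 ≤ σ) (hrρ : ENNReal.ofReal r ≤ ρ) (hρR : ρ ≠ ⊤ → ρ.toReal ≤ R')
    (s : ℝ) :
    shapedArrival L b r R' (s - mslcDelay L b r R' τ σ ρ) ≤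
      mslcStep τ (ENNReal.ofReal σ) ρ s := by
  have hb : 0 ≤ b := hL.trans hLb
  have hR : 0 < R' := hr.trans hrR
  rcases le_or_gt s 0 with hs | hs
  · rw [shapedArrival_of_nonpos (by linarith [@mslcDelay_nonneg L b r R' τ σ ρ])]
    exact zero_le
  rw [mslcStep_of_pos _ _ hτ hs]
  by_cases hρ : ρ = ⊤
  · subst hρ
    rcases le_or_gt s τ with hsτ | hsτ
    · rw [ENNReal.ofReal_of_nonpos (sub_nonpos.2 hsτ), mul_zero, add_zero,
        shapedArrival_le_ofReal_iff hL hb hr hR hσ]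
      linarith [sub_mslcDelay_top_le (L := L) (b := b) (τ := τ) (σ := σ) hr hR]
    · rw [ENNReal.top_mul (ENNReal.ofReal_pos.2 (sub_pos.2 hsτ)).ne', add_top]
      exact le_top
  · have hc : ENNReal.ofReal σ + ρ * ENNReal.ofReal (s - τ) =
        ENNReal.ofReal (σ + ρ.toReal * max (s - τ) 0) := by
      rw [ENNReal.ofReal_add hσ (by positivity), ENNReal.ofReal_mul ENNReal.toReal_nonneg,
        ENNReal.ofReal_toReal hρ, ENNReal.ofReal_max, ENNReal.ofReal_zero, max_eq_left zero_le]
    rw [hc, shapedArrival_le_ofReal_iff hL hb hr hR (by positivity)]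
    exact sub_mslcDelay_le hLb hr hrR hρ ((ENNReal.ofReal_le_iff_le_toReal hρ).1 hrρ)
      (hρR hρ) s

lemma hasDelayWitness_mslcStep_zero (hL : 0 ≤ L) (hb : 0 ≤ b) (hr : 0 < r) (hR : 0 < R') :
    HasDelayWitness (shapedArrival L b r R') (mslcStep τ (ENNReal.ofReal σ) ρ) 0 := by
  have hβ : mslcStep τ (ENNReal.ofReal σ) ρ 0 ≤ ENNReal.ofReal 0 := by
    rw [mslcStep_of_nonpos _ _ _ le_rfl]
    exact zero_le
  simpa [shapedArrivalInv_zero hL hb hr hR] using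
    hasDelayWitness_shapedArrival hL hb hr hR le_rfl le_rfl hβ

lemma hasDelayWitness_mslcStep_burst (hL : 0 ≤ L) (hb : 0 ≤ b) (hr : 0 < r) (hR : 0 < R')
    (hτ : 0 ≤ τ) (hσ : 0 ≤ σ) :
    HasDelayWitness (shapedArrival L b r R') (mslcStep τ (ENNReal.ofReal σ) ρ)
      (τ - shapedArrivalInv L b r R' σ) :=
  hasDelayWitness_shapedArrival hL hb hr hR hτ hσ (by simpa using mslcStep_le _ ρ hτ τ)

lemma hasDelayWitness_mslcStep_kneeLevel (hL : 0 ≤ L) (hLb : L ≤ b) (hr : 0 < r)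
    (hrR : r < R') (hτ : 0 ≤ τ) (hσ : 0 ≤ σ) (hρ : ρ ≠ ⊤) (hρ0 : 0 < ρ.toReal)
    (h : σ ≤ kneeLevel L b r R') :
    HasDelayWitness (shapedArrival L b r R') (mslcStep τ (ENNReal.ofReal σ) ρ)
      (τ + (kneeLevel L b r R' - σ) / ρ.toReal - kneeTime L b r R') := by
  set q := (kneeLevel L b r R' - σ) / ρ.toReal
  have hq : 0 ≤ q := div_nonneg (by linarith) hρ0.le
  have hβ :
      mslcStep τ (ENNReal.ofReal σ) ρ (τ + q) ≤ ENNReal.ofReal (kneeLevel L b r R') := by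
    refine (mslcStep_le _ ρ hτ _).trans (le_of_eq ?_)
    rw [add_sub_cancel_left, ← ENNReal.ofReal_toReal hρ, ← ENNReal.ofReal_mul hρ0.le,
      ← ENNReal.ofReal_add hσ (by positivity), mul_div_cancel₀ _ hρ0.ne', add_sub_cancel]
  have hY : kneeLevel L b r R' - b = kneeTime L b r R' * r := by rw [kneeLevel]; ring
  refine (hasDelayWitness_shapedArrival hL (hL.trans hLb) hr (hr.trans hrR) (by linarith)
    (by linarith) hβ).mono ?_
  have := shapedArrivalInv_le_of_kneeLevel_le hLb hr hrR le_rfl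
  rw [hY, mul_div_cancel_right₀ _ hr.ne'] at this
  linarith

lemma hasDelayWitness_mslcDelay (hL : 0 ≤ L) (hLb : L ≤ b) (hr : 0 < r) (hrR : r < R')
    (hτ : 0 ≤ τ) (hσ : 0 ≤ σ) (hrρ : ENNReal.ofReal r ≤ ρ) :
    HasDelayWitness (shapedArrival L b r R') (mslcStep τ (ENNReal.ofReal σ) ρ)
      (mslcDelay L b r R' τ σ ρ) := by
  have hb : 0 ≤ b := hL.trans hLb
  have hR : 0 < R' := hr.trans hrR
  have hzero := hasDelayWitness_mslcStep_zero (τ := τ) (σ := σ) (ρ := ρ) hL hb hr hR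
  have hburst := hasDelayWitness_mslcStep_burst (ρ := ρ) hL hb hr hR hτ hσ
  have hfirst : HasDelayWitness (shapedArrival L b r R') (mslcStep τ (ENNReal.ofReal σ) ρ)
      (τ * (if kneeLevel L b r R' ≤ σ then 1 else 0) - max (σ - b) 0 / r) := by
    split_ifs with h
    · refine hburst.mono ?_
      have : (σ - b) / r ≤ max (σ - b) 0 / r := by gcongr; exact le_max_left _ _
      linarith [shapedArrivalInv_le_of_kneeLevel_le hLb hr hrR h]
    · exact hzero.mono (by have := div_nonneg (le_max_right (σ - b) 0) hr.le; linarith)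
  rw [mslcDelay]
  by_cases hρ : ρ = ⊤
  · rw [if_pos hρ]
    refine hzero.max (hfirst.max ?_)
    split_ifs with h
    · refine hburst.mono ?_
      linarith [shapedArrivalInv_le_of_le_kneeLevel (L := L) (b := b) hr hrR h]
    · exact hzero.mono (by have := div_nonneg (le_max_right (σ - L) 0) hR.le; linarith)
  · rw [if_neg hρ]
    refine hzero.max (hfirst.max ?_)
    split_ifs with h
    · have hρ0 : 0 < ρ.toReal := hr.trans_le ((ENNReal.ofReal_le_iff_le_toReal hρ).1 hrρ)
      rw [max_eq_left (sub_nonneg.2 h), mul_one]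
      exact hasDelayWitness_mslcStep_kneeLevel hL hLb hr hrR hτ hσ hρ hρ0 h
    · refine hzero.mono ?_
      rw [max_eq_right (by linarith), zero_div, mul_zero, add_zero]
      linarith [kneeTime_nonneg hLb hrR]

end Mslc

theorem stmt8_general (L b r R' D : ℝ) (n : ℕ) (hn : 0 < n)
    (tau sig : Fin n → ℝ) (rho : Fin n → ℝ≥0∞)
    (hL : 0 ≤ L) (hLb : L ≤ b) (hr : 0 < r) (hrR : r < R') (hD : 0 ≤ D)
    (htau : ∀ i, 0 ≤ tau i) (hsig : ∀ i, 0 ≤ sig i)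
    (hrhoR : ∀ i, rho i ≠ ⊤ → (rho i).toReal ≤ R')
    (hrrho : ∀ i, ENNReal.ofReal r ≤ rho i) :
    hdev (tbkt (ENNReal.ofReal b) (ENNReal.ofReal r)
            ⊓ tbkt (ENNReal.ofReal L) (ENNReal.ofReal R'))
         (mconv (bdelay D) (⨅ i, mslcStep (tau i) (ENNReal.ofReal (sig i)) (rho i)))
      = ENNReal.ofReal D + ⨆ i, ENNReal.ofReal
          (if rho i = ⊤ then
            max 0 (max
              (tau i * (if (b - L) / (R' - r) * r + b ≤ sig i then 1 else 0)
                - max (sig i - b) 0 / r)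
              (tau i * (if sig i ≤ (b - L) / (R' - r) * r + b then 1 else 0)
                - max (sig i - L) 0 / R'))
          else
            max 0 (max
              (tau i * (if (b - L) / (R' - r) * r + b ≤ sig i then 1 else 0)
                - max (sig i - b) 0 / r)
              (tau i * (if sig i ≤ (b - L) / (R' - r) * r + b then 1 else 0)
                + max ((b - L) / (R' - r) * r + b - sig i) 0 / (rho i).toReal
                - (b - L) / (R' - r)))) := by
  have : Nonempty (Fin n) := ⟨⟨0, hn⟩⟩
  exact hdev_mconv_bdelay_iInf (m := fun i => mslcDelay L b r R' (tau i) (sig i) (rho i)) hD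
    shapedArrival_mono (fun i => mslcStep_mono _ _ (htau i))
    (fun i _ ht => mslcStep_of_nonpos _ _ _ ht) (fun _ => mslcDelay_nonneg)
    (fun i => shapedArrival_sub_mslcDelay_le hL hLb hr hrR (htau i) (hsig i) (hrrho i) (hrhoR i))
    (fun i => hasDelayWitness_mslcDelay hL hLb hr hrR (htau i) (hsig i) (hrrho i))

/-- delay bound for a shaped arrival curve and a general MSLC service curve. -/
theorem stmt8 (L b r R' D : ℝ) (n : ℕ) (hn : 0 < n)
    (tau sig : Fin n → ℝ) (rho : Fin n → ℝ≥0∞)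
    (hL : 0 ≤ L) (hLb : L ≤ b) (hr : 0 < r) (hrR : r < R') (hD : 0 ≤ D)
    (htau : ∀ i, 0 ≤ tau i) (hsig : ∀ i, 0 ≤ sig i) (hrhopos : ∀ i, 0 < rho i)
    (hrhoR : ∀ i, rho i ≠ ⊤ → (rho i).toReal ≤ R')
    (hrrho : ∀ i, ENNReal.ofReal r ≤ rho i) :
    hdev (tbkt (ENNReal.ofReal b) (ENNReal.ofReal r)
            ⊓ tbkt (ENNReal.ofReal L) (ENNReal.ofReal R'))
         (mconv (bdelay D) (⨅ i, mslcStep (tau i) (ENNReal.ofReal (sig i)) (rho i)))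
      = ENNReal.ofReal D + ⨆ i, ENNReal.ofReal
          (if rho i = ⊤ then
            max 0 (max
              (tau i * (if (b - L) / (R' - r) * r + b ≤ sig i then 1 else 0)
                - max (sig i - b) 0 / r)
              (tau i * (if sig i ≤ (b - L) / (R' - r) * r + b then 1 else 0)
                - max (sig i - L) 0 / R'))
          else
            max 0 (max
              (tau i * (if (b - L) / (R' - r) * r + b ≤ sig i then 1 else 0)
                - max (sig i - b) 0 / r)
              (tau i * (if sig i ≤ (b - L) / (R' - r) * r + b then 1 else 0)
                + max ((b - L) / (R' - r) * r + b - sig i) 0 / (rho i).toReal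
                - (b - L) / (R' - r)))) :=
  stmt8_general L b r R' D n hn tau sig rho hL hLb hr hrR hD htau hsig hrhoR hrrho
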